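/- Let ℓ ≥ 2 and let q ≥ 2 be a real number. Let λ = (λ_1,…,λ_k) be a composition of ℓ, and set m_i = λ_1+⋯+λ_{i−1}+1 and n_i = λ_1+⋯+λ_i for 1 ≤ i ≤ k. Let w : ℝ^ℓ → ℝ^ℓ be the linear map determined by w(e_j) = e_{j+1} for m_i ≤ j ≤ n_i−1 and w(e_{n_i}) = e_{m_i}, for each 1 ≤ i ≤ k (so w is the product of the disjoint cycles on the consecutive blocks [m_i, n_i]). Then there exists x = (x_1,…,x_ℓ) ∈ ℝ^ℓ with x_1 > x_2 > ⋯ > x_ℓ > 0 such that ⟨qx − wx, e_i − e_{i+1}⟩ > 0 for all 1 ≤ i ≤ ℓ−1. -/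

import Mathlib

open scoped RealInnerProductSpace

/-- The standard basis vector `e_j` (1-based) of `ℝ^ℓ`; zero for out-of-range indices. -/
noncomputable def E (ℓ : ℕ) (j : ℕ) : EuclideanSpace ℝ (Fin ℓ) :=
  if h : 1 ≤ j ∧ j ≤ ℓ then EuclideanSpace.single (⟨j - 1, by omega⟩ : Fin ℓ) (1 : ℝ) else 0

/-- The vector `(x_1, …, x_ℓ) ∈ ℝ^ℓ` built from a (1-based) sequence of reals. -/
noncomputable def vec (ℓ : ℕ) (x : ℕ → ℝ) : EuclideanSpace ℝ (Fin ℓ) :=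
  WithLp.toLp 2 (fun i : Fin ℓ => x (i.1 + 1))

/-! Each `e_i` is the image under `w` of `e_{τ i}`, where `τ` is the inverse of the
block cycle, so `⟨qx - wx, e_i - e_{i+1}⟩ = q (x_i - x_{i+1}) - (x_{τ i} - x_{τ (i+1)})`. Take
`x_j = k - b(j) + (2/3)^j`, where `b(j)` is the block containing `j`. When `i` and `i+1` lie in
the same block, `τ (i+1) = i` and `τ i ≥ i - 1`, so the geometric term wins because
`q · 2/3 > 1`. When `i` ends a block, the staircase term drops by some `d ≥ 1` from `i` to
`i+1`, and `(q - 1) d ≥ 1` beats the less than `1` that the geometric terms can contribute. -/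

section Blocks

variable {lam : ℕ → ℕ} {i j b n : ℕ}

def partialSum (lam : ℕ → ℕ) (i : ℕ) : ℕ := ∑ t ∈ Finset.Icc 1 i, lam t

lemma partialSum_zero : partialSum lam 0 = 0 := by simp [partialSum]

lemma partialSum_mono (lam : ℕ → ℕ) : Monotone (partialSum lam) := fun _ _ h =>
  Finset.sum_le_sum_of_subset (Finset.Icc_subset_Icc_right h)

/-- The index `b` of the block `[partialSum lam (b-1) + 1, partialSum lam b]` containing `j`. -/
noncomputable def block (lam : ℕ → ℕ) (j : ℕ) : ℕ := sInf {b | j ≤ partialSum lam b}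

lemma block_le (h : j ≤ partialSum lam b) : block lam j ≤ b := Nat.sInf_le h

lemma le_partialSum_block (h : j ≤ partialSum lam n) : j ≤ partialSum lam (block lam j) :=
  Nat.sInf_mem (s := {b | j ≤ partialSum lam b}) ⟨n, h⟩

lemma partialSum_block_pred_lt (hj : 1 ≤ j) (h : j ≤ partialSum lam n) :
    partialSum lam (block lam j - 1) < j := by
  by_contra! hle
  have h0 : block lam j = 0 := by have := block_le hle; omega
  have := le_partialSum_block h
  rw [h0, partialSum_zero] at this
  omega

lemma one_le_block (hj : 1 ≤ j) (h : j ≤ partialSum lam n) : 1 ≤ block lam j := by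
  by_contra! h0
  have := le_partialSum_block h
  rw [Nat.lt_one_iff.mp h0, partialSum_zero] at this
  omega

lemma block_eq (h₁ : partialSum lam (b - 1) < j) (h₂ : j ≤ partialSum lam b) :
    block lam j = b := by
  refine le_antisymm (block_le h₂) (Nat.le_of_not_lt fun hlt => ?_)
  have := partialSum_mono lam (Nat.le_sub_one_of_lt hlt)
  have := le_partialSum_block h₂
  omega

lemma block_mono (hij : i ≤ j) (h : j ≤ partialSum lam n) : block lam i ≤ block lam j :=
  block_le (hij.trans (le_partialSum_block h))

end Blocks

section Cycle

variable {lam : ℕ → ℕ} {i j n : ℕ}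

noncomputable def cycleSucc (lam : ℕ → ℕ) (j : ℕ) : ℕ :=
  if j = partialSum lam (block lam j) then partialSum lam (block lam j - 1) + 1 else j + 1

noncomputable def cyclePred (lam : ℕ → ℕ) (i : ℕ) : ℕ :=
  if i = partialSum lam (block lam i - 1) + 1 then partialSum lam (block lam i) else i - 1

lemma cycleSucc_mem_block (hj : 1 ≤ j) (h : j ≤ partialSum lam n) :
    partialSum lam (block lam j - 1) < cycleSucc lam j ∧
      cycleSucc lam j ≤ partialSum lam (block lam j) := by
  have := partialSum_block_pred_lt hj h
  have := le_partialSum_block h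
  unfold cycleSucc
  split_ifs <;> omega

lemma cyclePred_mem_block (hi : 1 ≤ i) (h : i ≤ partialSum lam n) :
    partialSum lam (block lam i - 1) < cyclePred lam i ∧
      cyclePred lam i ≤ partialSum lam (block lam i) := by
  have := partialSum_block_pred_lt hi h
  have := le_partialSum_block h
  unfold cyclePred
  split_ifs <;> omega

lemma block_cycleSucc (hj : 1 ≤ j) (h : j ≤ partialSum lam n) :
    block lam (cycleSucc lam j) = block lam j :=
  block_eq (cycleSucc_mem_block hj h).1 (cycleSucc_mem_block hj h).2

lemma block_cyclePred (hi : 1 ≤ i) (h : i ≤ partialSum lam n) :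
    block lam (cyclePred lam i) = block lam i :=
  block_eq (cyclePred_mem_block hi h).1 (cyclePred_mem_block hi h).2

lemma cycleSucc_mem_Icc (hj : 1 ≤ j) (h : j ≤ partialSum lam n) :
    1 ≤ cycleSucc lam j ∧ cycleSucc lam j ≤ partialSum lam n := by
  have := cycleSucc_mem_block hj h
  have := partialSum_mono lam (block_le h)
  omega

lemma cyclePred_mem_Icc (hi : 1 ≤ i) (h : i ≤ partialSum lam n) :
    1 ≤ cyclePred lam i ∧ cyclePred lam i ≤ partialSum lam n := by
  have := cyclePred_mem_block hi h
  have := partialSum_mono lam (block_le h)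
  omega

lemma cycleSucc_eq_iff (hi : 1 ≤ i) (hin : i ≤ partialSum lam n)
    (hj : 1 ≤ j) (hjn : j ≤ partialSum lam n) :
    cycleSucc lam j = i ↔ j = cyclePred lam i := by
  have same_block : block lam j = block lam i → (cycleSucc lam j = i ↔ j = cyclePred lam i) := by
    intro hb
    have := partialSum_block_pred_lt hi hin
    have := le_partialSum_block hin
    have := partialSum_block_pred_lt hj hjn
    have := le_partialSum_block hjn
    unfold cycleSucc cyclePred
    rw [hb] at *
    split_ifs <;> omega
  constructor
  · intro hs
    exact (same_block (by rw [← hs, block_cycleSucc hj hjn])).1 hs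
  · intro hp
    exact (same_block (by rw [hp, block_cyclePred hi hin])).2 hp

lemma sub_one_le_cyclePred (hi : 1 ≤ i) (h : i ≤ partialSum lam n) : i - 1 ≤ cyclePred lam i := by
  have := le_partialSum_block h
  unfold cyclePred
  split_ifs <;> omega

lemma cyclePred_succ (hi : 1 ≤ i) (h : i ≤ partialSum lam n)
    (hb : block lam (i + 1) = block lam i) : cyclePred lam (i + 1) = i := by
  have := partialSum_block_pred_lt hi h
  unfold cyclePred
  rw [hb, if_neg (by omega)]
  rfl

end Cycle

section Coordinates

variable {ℓ : ℕ}

lemma inner_E_E {a b : ℕ} (ha : 1 ≤ a) (ha' : a ≤ ℓ) (hb : 1 ≤ b) (hb' : b ≤ ℓ) :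
    ⟪E ℓ a, E ℓ b⟫ = if a = b then 1 else 0 := by
  rw [E, E, dif_pos ⟨ha, ha'⟩, dif_pos ⟨hb, hb'⟩, EuclideanSpace.inner_single_left,
    PiLp.single_apply]
  simp only [Fin.mk.injEq, map_one, one_mul]
  exact if_congr (by omega) rfl rfl

lemma inner_vec_E (x : ℕ → ℝ) {a : ℕ} (ha : 1 ≤ a) (ha' : a ≤ ℓ) : ⟪vec ℓ x, E ℓ a⟫ = x a := by
  rw [E, dif_pos ⟨ha, ha'⟩, EuclideanSpace.inner_single_right, one_mul, conj_trivial]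
  change x (a - 1 + 1) = x a
  rw [Nat.sub_add_cancel ha]

lemma vec_eq_sum (x : ℕ → ℝ) : vec ℓ x = ∑ j ∈ Finset.Icc 1 ℓ, x j • E ℓ j := by
  ext p
  rw [WithLp.ofLp_sum, Finset.sum_apply, Finset.sum_eq_single_of_mem (p.1 + 1) (by simp)]
  · simp [vec, E]
  · intro j hj hne
    rw [Finset.mem_Icc] at hj
    simp only [E, dif_pos hj, WithLp.ofLp_smul, Pi.smul_apply, PiLp.single_apply,
      Fin.ext_iff, smul_eq_mul, mul_ite, mul_one, mul_zero]
    exact if_neg (by omega)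

lemma inner_map_vec_E (w : EuclideanSpace ℝ (Fin ℓ) →ₗ[ℝ] EuclideanSpace ℝ (Fin ℓ))
    (x : ℕ → ℝ) {i p : ℕ} (hp : 1 ≤ p) (hp' : p ≤ ℓ)
    (hw : ∀ j, 1 ≤ j → j ≤ ℓ → ⟪w (E ℓ j), E ℓ i⟫ = if j = p then 1 else 0) :
    ⟪w (vec ℓ x), E ℓ i⟫ = x p := by
  rw [vec_eq_sum, map_sum, sum_inner]
  have hterm : ∀ j ∈ Finset.Icc 1 ℓ, ⟪w (x j • E ℓ j), E ℓ i⟫ = if j = p then x j else 0 := by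
    intro j hj
    rw [Finset.mem_Icc] at hj
    rw [map_smul, real_inner_smul_left, hw j hj.1 hj.2, mul_ite, mul_one, mul_zero]
  rw [Finset.sum_congr rfl hterm, Finset.sum_ite_eq', if_pos (Finset.mem_Icc.mpr ⟨hp, hp'⟩)]

end Coordinates

section BlockCycleMap

variable {ℓ n : ℕ} {lam : ℕ → ℕ} {w : EuclideanSpace ℝ (Fin ℓ) →ₗ[ℝ] EuclideanSpace ℝ (Fin ℓ)}

def IsBlockCycleMap (lam : ℕ → ℕ) (n : ℕ)
    (w : EuclideanSpace ℝ (Fin ℓ) →ₗ[ℝ] EuclideanSpace ℝ (Fin ℓ)) : Prop :=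
  ∀ b, 1 ≤ b → b ≤ n →
    (∀ j, partialSum lam (b - 1) + 1 ≤ j →
        j + 1 ≤ partialSum lam b → w (E ℓ j) = E ℓ (j + 1)) ∧
    w (E ℓ (partialSum lam b)) = E ℓ (partialSum lam (b - 1) + 1)

lemma apply_E_eq_cycleSucc (hw : IsBlockCycleMap lam n w) {j : ℕ} (hj : 1 ≤ j)
    (h : j ≤ partialSum lam n) :
    w (E ℓ j) = E ℓ (cycleSucc lam j) := by
  obtain ⟨hinterior, hlast⟩ := hw (block lam j) (one_le_block hj h) (block_le h)
  have := partialSum_block_pred_lt hj h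
  unfold cycleSucc
  split_ifs with hj_last
  · conv_lhs => rw [hj_last]
    exact hlast
  · exact hinterior j (by omega) (by have := le_partialSum_block h; omega)

lemma inner_map_vec_E_eq_cyclePred (hℓ : partialSum lam n = ℓ) (hw : IsBlockCycleMap lam n w)
    (x : ℕ → ℝ) {i : ℕ} (hi : 1 ≤ i) (hi' : i ≤ ℓ) :
    ⟪w (vec ℓ x), E ℓ i⟫ = x (cyclePred lam i) := by
  subst hℓ
  obtain ⟨hp, hp'⟩ := cyclePred_mem_Icc hi hi'
  refine inner_map_vec_E w x hp hp' fun j hj hj' => ?_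
  obtain ⟨hs, hs'⟩ := cycleSucc_mem_Icc hj hj'
  rw [apply_E_eq_cycleSucc hw hj hj', inner_E_E hs hs' hi hi']
  exact if_congr (cycleSucc_eq_iff hi hi' hj hj') rfl rfl

end BlockCycleMap

section Staircase

variable {lam : ℕ → ℕ} {i n : ℕ}

noncomputable def blockStaircase (lam : ℕ → ℕ) (c : ℝ) (j : ℕ) : ℝ :=
  c - block lam j + (2 / 3 : ℝ) ^ j

lemma blockStaircase_succ_lt (c : ℝ) (h : i + 1 ≤ partialSum lam n) :
    blockStaircase lam c (i + 1) < blockStaircase lam c i := by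
  have hblock : (block lam i : ℝ) ≤ block lam (i + 1) := by
    exact_mod_cast block_mono (Nat.le_succ i) h
  have hpow : (2 / 3 : ℝ) ^ (i + 1) < (2 / 3) ^ i :=
    pow_lt_pow_right_of_lt_one₀ (by norm_num) (by norm_num) (Nat.lt_succ_self i)
  unfold blockStaircase
  linarith

lemma geom_two_thirds_gap {q : ℝ} (hq : 2 ≤ q) (m : ℕ) :
    (2 / 3 : ℝ) ^ m - (2 / 3) ^ (m + 1) < q * ((2 / 3) ^ (m + 1) - (2 / 3) ^ (m + 2)) := by
  have hpos : (0 : ℝ) < (2 / 3) ^ m := by positivity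
  rw [pow_succ, pow_succ, pow_succ]
  nlinarith

lemma blockStaircase_cycle_gap_pos {q : ℝ} (hq : 2 ≤ q) (c : ℝ)
    (hi : 1 ≤ i) (h : i + 1 ≤ partialSum lam n) :
    0 < q * (blockStaircase lam c i - blockStaircase lam c (i + 1)) -
      (blockStaircase lam c (cyclePred lam i) - blockStaircase lam c (cyclePred lam (i + 1))) := by
  have hi_le : i ≤ partialSum lam n := by omega
  have hblock := block_mono (Nat.le_succ i) h
  simp only [blockStaircase, block_cyclePred hi hi_le, block_cyclePred (by omega : 1 ≤ i + 1) h]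
  rcases hblock.lt_or_eq with hlt | heq
  · have hstep : (block lam i : ℝ) + 1 ≤ block lam (i + 1) := by exact_mod_cast hlt
    have hle_one : (2 / 3 : ℝ) ^ cyclePred lam i ≤ 1 := pow_le_one₀ (by norm_num) (by norm_num)
    have hpos : (0 : ℝ) < (2 / 3) ^ cyclePred lam (i + 1) := by positivity
    have hpow : (2 / 3 : ℝ) ^ (i + 1) ≤ (2 / 3) ^ i :=
      pow_le_pow_of_le_one (by norm_num) (by norm_num) (Nat.le_succ i)
    nlinarith [mul_nonneg (by linarith : (0 : ℝ) ≤ q - 2)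
      (by linarith : (0 : ℝ) ≤ block lam (i + 1) - block lam i - 1)]
  · rw [cyclePred_succ hi hi_le heq.symm, heq]
    have hpred : (2 / 3 : ℝ) ^ cyclePred lam i ≤ (2 / 3) ^ (i - 1) :=
      pow_le_pow_of_le_one (by norm_num) (by norm_num) (sub_one_le_cyclePred hi hi_le)
    obtain ⟨m, rfl⟩ : ∃ m, i = m + 1 := ⟨i - 1, by omega⟩
    have := geom_two_thirds_gap hq m
    simp only [add_tsub_cancel_right] at hpred
    linarith

end Staircase

theorem stmt_5_general (ℓ : ℕ) (q : ℝ) (hq : 2 ≤ q)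
    (k : ℕ) (lam : ℕ → ℕ)
    (hsum : ∑ j ∈ Finset.Icc 1 k, lam j = ℓ)
    (w : EuclideanSpace ℝ (Fin ℓ) →ₗ[ℝ] EuclideanSpace ℝ (Fin ℓ))
    (hw : ∀ i, 1 ≤ i → i ≤ k →
      (∀ j, (∑ t ∈ Finset.Icc 1 (i - 1), lam t) + 1 ≤ j →
          j + 1 ≤ ∑ t ∈ Finset.Icc 1 i, lam t → w (E ℓ j) = E ℓ (j + 1)) ∧
      w (E ℓ (∑ t ∈ Finset.Icc 1 i, lam t))
        = E ℓ ((∑ t ∈ Finset.Icc 1 (i - 1), lam t) + 1)) :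
    ∃ x : ℕ → ℝ,
      (∀ j, 1 ≤ j → j < ℓ → x (j + 1) < x j) ∧ 0 < x ℓ ∧
      (∀ i, 1 ≤ i → i + 1 ≤ ℓ →
        0 < ⟪q • vec ℓ x - w (vec ℓ x), E ℓ i - E ℓ (i + 1)⟫) := by
  have hℓ : partialSum lam k = ℓ := hsum
  refine ⟨blockStaircase lam k, fun j _ hj => blockStaircase_succ_lt _ (hℓ ▸ hj), ?_, ?_⟩
  · have : (block lam ℓ : ℝ) ≤ k := by exact_mod_cast block_le hℓ.ge
    unfold blockStaircase
    linarith [pow_pos (by norm_num : (0 : ℝ) < 2 / 3) ℓ]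
  · intro i hi hi'
    rw [inner_sub_left, inner_sub_right, inner_sub_right, real_inner_smul_left,
      real_inner_smul_left, inner_vec_E _ hi (by omega), inner_vec_E _ (by omega) hi',
      inner_map_vec_E_eq_cyclePred hℓ hw _ hi (by omega),
      inner_map_vec_E_eq_cyclePred hℓ hw _ (by omega) hi']
    linarith [blockStaircase_cycle_gap_pos hq (k : ℝ) hi (hℓ ▸ hi')]

/-- For a composition `λ` of `ℓ` and the product `w = w_λ` of the disjoint
cycles on the consecutive blocks `[m_i, n_i]`, there exists `x_1 > ⋯ > x_ℓ > 0` with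
`⟨qx - wx, e_i - e_{i+1}⟩ > 0` for all `1 ≤ i ≤ ℓ-1`. -/
theorem stmt_5 (ℓ : ℕ) (hℓ : 2 ≤ ℓ) (q : ℝ) (hq : 2 ≤ q)
    (k : ℕ) (hk : 1 ≤ k) (lam : ℕ → ℕ)
    (hlam : ∀ i, 1 ≤ i → i ≤ k → 1 ≤ lam i)
    (hsum : ∑ j ∈ Finset.Icc 1 k, lam j = ℓ)
    (w : EuclideanSpace ℝ (Fin ℓ) →ₗ[ℝ] EuclideanSpace ℝ (Fin ℓ))
    (hw : ∀ i, 1 ≤ i → i ≤ k →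
      (∀ j, (∑ t ∈ Finset.Icc 1 (i - 1), lam t) + 1 ≤ j →
          j + 1 ≤ ∑ t ∈ Finset.Icc 1 i, lam t → w (E ℓ j) = E ℓ (j + 1)) ∧
      w (E ℓ (∑ t ∈ Finset.Icc 1 i, lam t))
        = E ℓ ((∑ t ∈ Finset.Icc 1 (i - 1), lam t) + 1)) :
    ∃ x : ℕ → ℝ,
      (∀ j, 1 ≤ j → j < ℓ → x (j + 1) < x j) ∧ 0 < x ℓ ∧
      (∀ i, 1 ≤ i → i + 1 ≤ ℓ →
        0 < ⟪q • vec ℓ x - w (vec ℓ x), E ℓ i - E ℓ (i + 1)⟫) :=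
  stmt_5_general ℓ q hq k lam hsum w hw
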